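/- arXiv:2512.02958 — 6 statements merged into one kernel-verified Lean document; each statement's English description precedes it below -/
import Mathlib

section
/- Let $t \ge 2$ and let $G$ be a simple graph on $n$ vertices in which every vertex lies in at least one edge-containing clique (equivalently, $c(v)$ is well-defined with $c(v) \ge 1$ for all $v$). Then the number of copies of $K_t$ in $G$ satisfies $N(G,K_t) \le n^{t-1} \sum_{v \in V(G)} \frac{1}{c(v)^t} \binom{c(v)}{t}$. -/
open Finset
open scoped Classical

/-- The order of the largest clique of `G` containing the vertex `v`. -/
noncomputable def cliqueAt {n : ℕ} (G : SimpleGraph (Fin n)) (v : Fin n) : ℕ :=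
  ((univ : Finset (Finset (Fin n))).filter
    (fun s : Finset (Fin n) => G.IsClique (s : Set (Fin n)) ∧ v ∈ s)).sup Finset.card

/-- The set of copies of `K_t` in `G`, as `t`-element vertex sets inducing cliques. -/
noncomputable def ktCliques {n : ℕ} (G : SimpleGraph (Fin n)) (t : ℕ) :
    Finset (Finset (Fin n)) :=
  (univ : Finset (Finset (Fin n))).filter
    (fun s : Finset (Fin n) => s.card = t ∧ G.IsClique (s : Set (Fin n)))

/-- `N(G, K_t)`, the number of copies of `K_t` in `G`. -/
noncomputable def numKt {n : ℕ} (G : SimpleGraph (Fin n)) (t : ℕ) : ℕ :=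
  (ktCliques G t).card

/-- The standard simplex `Δ^{n-1}`. -/
def simplex (n : ℕ) : Set (Fin n → ℝ) :=
  {x | (∀ i, 0 ≤ x i) ∧ ∑ i, x i = 1}

/-- `Φ(G, x) = A(G,x) - B(G,x)`. -/
noncomputable def PhiFn {n : ℕ} (G : SimpleGraph (Fin n)) (t : ℕ) (x : Fin n → ℝ) : ℝ :=
  (∑ v, x v * ((cliqueAt G v).choose t : ℝ) / (cliqueAt G v : ℝ) ^ t)
    - ∑ s ∈ ktCliques G t, ∏ v ∈ s, x v

/-- The support of `x`, as a finset. -/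
noncomputable def suppF {n : ℕ} (x : Fin n → ℝ) : Finset (Fin n) :=
  (univ : Finset (Fin n)).filter (fun v => 0 < x v)

/-- `x` is a minimizer of `Φ(G, ·)` over the simplex. -/
def IsMinimizer {n : ℕ} (G : SimpleGraph (Fin n)) (t : ℕ) (x : Fin n → ℝ) : Prop :=
  x ∈ simplex n ∧ ∀ y ∈ simplex n, PhiFn G t x ≤ PhiFn G t y

/-- `δ_{ij}(x)`. -/
noncomputable def deltaFn {n : ℕ} (G : SimpleGraph (Fin n)) (t : ℕ) (x : Fin n → ℝ)
    (i j : Fin n) : ℝ :=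
  (((cliqueAt G i).choose t : ℝ) / (cliqueAt G i : ℝ) ^ t
      - ((cliqueAt G j).choose t : ℝ) / (cliqueAt G j : ℝ) ^ t)
    - ((∑ s ∈ (ktCliques G (t - 1)).filter (fun s => ∀ v ∈ s, G.Adj i v), ∏ v ∈ s, x v)
      - (∑ s ∈ (ktCliques G (t - 1)).filter (fun s => ∀ v ∈ s, G.Adj j v), ∏ v ∈ s, x v))

/-- `G` is a regular complete multipartite graph: the vertices can be colored so that
adjacency is exactly "different colors" and all color classes have the same size. -/
def IsRegularCompleteMultipartite {n : ℕ} (G : SimpleGraph (Fin n)) : Prop :=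
  ∃ (r : ℕ) (f : Fin n → Fin r),
    (∀ u v, G.Adj u v ↔ f u ≠ f v) ∧
    (∀ a b : Fin r,
      ((univ : Finset (Fin n)).filter (fun v => f v = a)).card =
        ((univ : Finset (Fin n)).filter (fun v => f v = b)).card)


/-! The bound is the uniform-weight case `x = (1/n, …, 1/n)` of the weighted inequality
`∑_{S ≅ K_t} ∏_{v ∈ S} x v ≤ ∑_v x v * C(c(v), t) / c(v)^t` on the simplex (`PhiFn_nonneg`),
proved by induction on the support of `x`. If the support is a clique `K`, Maclaurin's
inequality bounds the left side by `C(|K|, t) / |K|^t`, and `k ↦ C(k, t) / k^t` is monotone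
while `|K| ≤ c(v)` on `K`. Otherwise the support contains two non-adjacent vertices `i, j`; no
clique contains both, so both sides are affine along the transfer of mass between `i` and `j`,
and `x` is a convex combination of the two points where all of that mass sits on `i` or on `j`,
each of smaller support. -/

theorem pow_add_mul_sub_le_pow {p q : ℝ} (hp : 0 ≤ p) (hq : 0 ≤ q) (r : ℕ) :
    p ^ (r + 1) + (r + 1) * p ^ r * (q - p) ≤ q ^ (r + 1) := by
  induction r with
  | zero => simp
  | succ r ih =>
    have hsq : 0 ≤ (r + 1) * p ^ r * (q - p) ^ 2 := by positivity
    push_cast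
    calc p ^ (r + 1 + 1) + (r + 1 + 1) * p ^ (r + 1) * (q - p)
        = q * (p ^ (r + 1) + (r + 1) * p ^ r * (q - p)) - (r + 1) * p ^ r * (q - p) ^ 2 := by
          ring
      _ ≤ q * q ^ (r + 1) - 0 := sub_le_sub (mul_le_mul_of_nonneg_left ih hq) hsq
      _ = q ^ (r + 1 + 1) := by ring

-- The inductive step of Maclaurin's inequality: `p` is the mean of `k` values, `y` a new one.
theorem choose_mul_pow_add_le (k r : ℕ) {p y : ℝ} (hp : 0 ≤ p) (hy : 0 ≤ y) :
    k.choose (r + 1) * p ^ (r + 1) + y * (k.choose r * p ^ r) ≤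
      (k + 1).choose (r + 1) * ((k * p + y) / (k + 1)) ^ (r + 1) := by
  set q := (k * p + y) / (k + 1) with hq
  have hqk : (k + 1) * q = k * p + y := by rw [hq]; field_simp
  have hpascal : ((k + 1).choose (r + 1) : ℝ) = k.choose r + k.choose (r + 1) := by
    exact_mod_cast Nat.choose_succ_succ' k r
  have habsorb : ((k + 1 : ℕ) : ℝ) * k.choose r = (k + 1).choose (r + 1) * (r + 1 : ℕ) := by
    exact_mod_cast Nat.add_one_mul_choose_eq k r
  push_cast at habsorb
  calc _ = (k + 1).choose (r + 1) * (p ^ (r + 1) + (r + 1) * p ^ r * (q - p)) := by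
        linear_combination (-(p ^ (r + 1))) * hpascal + (p ^ r * (q - p)) * habsorb
          - (k.choose r * p ^ r) * hqk
    _ ≤ _ := by gcongr; exact pow_add_mul_sub_le_pow hp (by positivity) r

section Maclaurin

variable {ι R : Type*} [DecidableEq ι]

theorem sum_powersetCard_succ_insert_prod [CommSemiring R] {a : ι} {s : Finset ι} (ha : a ∉ s)
    (f : ι → R) (r : ℕ) :
    ∑ S ∈ (insert a s).powersetCard (r + 1), ∏ i ∈ S, f i =
      ∑ S ∈ s.powersetCard (r + 1), ∏ i ∈ S, f i + f a * ∑ S ∈ s.powersetCard r, ∏ i ∈ S, f i := by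
  have hnot : ∀ {S} {m : ℕ}, S ∈ s.powersetCard m → a ∉ S := fun hS h =>
    ha ((mem_powersetCard.1 hS).1 h)
  rw [powersetCard_succ_insert ha, sum_union, sum_image, mul_sum]
  · exact congrArg _ (sum_congr rfl fun S hS => prod_insert (hnot hS))
  · intro S hS T hT h
    rw [← erase_insert (hnot hS), ← erase_insert (hnot hT)]
    exact congrArg (erase · a) h
  · exact disjoint_left.2 fun S hS hS' => by
      obtain ⟨T, -, rfl⟩ := mem_image.1 hS'
      exact hnot hS (mem_insert_self a T)

theorem sum_powersetCard_prod_le_choose_mul_pow (K : Finset ι) {y : ι → ℝ}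
    (hy : ∀ i ∈ K, 0 ≤ y i) (t : ℕ) :
    ∑ S ∈ K.powersetCard t, ∏ i ∈ S, y i ≤ K.card.choose t * ((∑ i ∈ K, y i) / K.card) ^ t := by
  induction K using Finset.induction_on generalizing t with
  | empty =>
    rcases t with _ | r
    · simp
    · simp [powersetCard_eq_empty.2 (show (∅ : Finset ι).card < r + 1 by simp)]
  | @insert a K ha ih =>
    have hyK : ∀ i ∈ K, 0 ≤ y i := fun i hi => hy i (mem_insert_of_mem hi)
    cases t with
    | zero => simp
    | succ r =>
      have hmean : (K.card : ℝ) * ((∑ i ∈ K, y i) / K.card) = ∑ i ∈ K, y i := by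
        rcases K.eq_empty_or_nonempty with rfl | hK
        · simp
        · exact mul_div_cancel₀ _ (by exact_mod_cast hK.card_pos.ne')
      have hstep := choose_mul_pow_add_le K.card r (div_nonneg (sum_nonneg hyK) K.card.cast_nonneg)
        (hy a (mem_insert_self a K))
      rw [hmean, add_comm (∑ i ∈ K, y i)] at hstep
      rw [sum_powersetCard_succ_insert_prod ha, card_insert_of_notMem ha, sum_insert ha]
      push_cast
      refine le_trans ?_ hstep
      gcongr
      · exact ih hyK _
      · exact hy a (mem_insert_self a K)
      · exact ih hyK _

end Maclaurin

theorem choose_div_pow_monotone (t : ℕ) : Monotone fun k : ℕ => (k.choose t : ℝ) / (k : ℝ) ^ t := by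
  refine monotone_nat_of_le_succ fun k => ?_
  rcases t with _ | r
  · simp
  rcases k with _ | k
  · simp only [Nat.choose_zero_succ, Nat.cast_zero, zero_div]; positivity
  have h := choose_mul_pow_add_le (k + 1) r (inv_nonneg.2 (k + 1 : ℕ).cast_nonneg) le_rfl
  rw [mul_inv_cancel₀ (by positivity)] at h
  simp only [zero_mul, add_zero, one_div] at h
  simpa [div_eq_mul_inv, inv_pow] using h

section MoveMass

variable {V R : Type*} [DecidableEq V]

def moveMass [Add R] [Zero R] (x : V → R) (i j : V) : V → R :=
  Function.update (Function.update x i (x i + x j)) j 0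

theorem sum_moveMass [AddCommMonoid R] [Fintype V] (x : V → R) {i j : V} (hij : i ≠ j) :
    ∑ v, moveMass x i j v = ∑ v, x v := by
  have hi : i ∈ univ.erase j := mem_erase.2 ⟨hij, mem_univ i⟩
  rw [← add_sum_erase _ _ (mem_univ j), ← add_sum_erase _ _ (mem_univ j),
    ← add_sum_erase _ _ hi, ← add_sum_erase _ _ hi]
  simp only [moveMass, Function.update_self, Function.update_of_ne hij]
  rw [sum_congr rfl fun v hv => by
    rw [Function.update_of_ne (mem_erase.1 (mem_erase.1 hv).2).1,
      Function.update_of_ne (mem_erase.1 hv).1]]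
  abel

theorem moveMass_eq_zero_of_notMem [AddZeroClass R] {x : V → R} {K : Finset V}
    (hxK : ∀ v ∉ K, x v = 0) {i : V} (hi : i ∈ K) (j : V) :
    ∀ v ∉ K.erase j, moveMass x i j v = 0 := by
  intro v hv
  rcases eq_or_ne v j with rfl | hvj
  · exact Function.update_self ..
  have hvK : v ∉ K := fun h => hv (mem_erase.2 ⟨hvj, h⟩)
  rw [moveMass, Function.update_of_ne hvj, Function.update_of_ne (ne_of_mem_of_not_mem hi hvK).symm]
  exact hxK v hvK

theorem add_mul_prod_eq_moveMass_of_notMem [CommSemiring R] (x : V → R) {i j : V}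
    {s : Finset V} (hj : j ∉ s) :
    (x i + x j) * ∏ v ∈ s, x v =
      x i * ∏ v ∈ s, moveMass x i j v + x j * ∏ v ∈ s, moveMass x j i v := by
  by_cases hi : i ∈ s
  · simp only [← mul_prod_erase s x hi, moveMass, prod_update_of_notMem hj,
      prod_update_of_mem hi, sdiff_singleton_eq_erase, zero_mul, mul_zero, add_zero]
    ring
  · simp only [moveMass, prod_update_of_notMem hj, prod_update_of_notMem hi]
    ring

theorem add_mul_prod_eq_moveMass [CommSemiring R] (x : V → R) {i j : V} {s : Finset V}
    (hs : ¬(i ∈ s ∧ j ∈ s)) :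
    (x i + x j) * ∏ v ∈ s, x v =
      x i * ∏ v ∈ s, moveMass x i j v + x j * ∏ v ∈ s, moveMass x j i v := by
  by_cases hj : j ∈ s
  · rw [add_comm (x i), add_comm (x i * _)]
    exact add_mul_prod_eq_moveMass_of_notMem x fun hi => hs ⟨hi, hj⟩
  · exact add_mul_prod_eq_moveMass_of_notMem x hj

end MoveMass

section Zykov

variable {n : ℕ} (G : SimpleGraph (Fin n)) (t : ℕ)

theorem mem_ktCliques {s : Finset (Fin n)} :
    s ∈ ktCliques G t ↔ s.card = t ∧ G.IsClique (s : Set (Fin n)) := by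
  simp [ktCliques]

theorem card_le_cliqueAt {K : Finset (Fin n)} (hK : G.IsClique (K : Set (Fin n))) {v : Fin n}
    (hv : v ∈ K) : K.card ≤ cliqueAt G v :=
  le_sup (mem_filter.2 ⟨mem_univ K, hK, hv⟩)

theorem moveMass_mem_simplex {x : Fin n → ℝ} (hx : x ∈ simplex n) {i j : Fin n} (hij : i ≠ j) :
    moveMass x i j ∈ simplex n := by
  refine ⟨fun v => ?_, (sum_moveMass x hij).trans hx.2⟩
  unfold moveMass
  rcases eq_or_ne v j with rfl | hvj
  · simp
  rw [Function.update_of_ne hvj]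
  rcases eq_or_ne v i with rfl | hvi
  · simpa using add_nonneg (hx.1 v) (hx.1 j)
  · rw [Function.update_of_ne hvi]; exact hx.1 v

theorem PhiFn_nonneg_of_isClique {K : Finset (Fin n)} (hK : G.IsClique (K : Set (Fin n)))
    {x : Fin n → ℝ} (hx : x ∈ simplex n) (hxK : ∀ v ∉ K, x v = 0) : 0 ≤ PhiFn G t x := by
  obtain ⟨hx0, hx1⟩ := hx
  have hsumK : ∑ v ∈ K, x v = 1 := by
    rw [← hx1]
    exact sum_subset (subset_univ K) fun v _ hv => hxK v hv
  have hcliques : ∑ s ∈ ktCliques G t, ∏ v ∈ s, x v ≤ ∑ S ∈ K.powersetCard t, ∏ v ∈ S, x v := by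
    rw [← sum_filter_of_ne (p := (· ⊆ K)) fun s _ hs => ?_]
    · refine sum_le_sum_of_subset_of_nonneg (fun s hs => ?_) fun S _ _ =>
        prod_nonneg fun v _ => hx0 v
      obtain ⟨hs, hsK⟩ := mem_filter.1 hs
      exact mem_powersetCard.2 ⟨hsK, ((mem_ktCliques G t).1 hs).1⟩
    · intro v hv
      by_contra hvK
      exact hs (prod_eq_zero hv (hxK v hvK))
  have hmaclaurin := sum_powersetCard_prod_le_choose_mul_pow K (fun v _ => hx0 v) t
  rw [hsumK] at hmaclaurin
  have hvertices : (K.card.choose t : ℝ) * (1 / K.card) ^ t ≤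
      ∑ v, x v * ((cliqueAt G v).choose t : ℝ) / (cliqueAt G v : ℝ) ^ t := calc
    _ = ∑ v, x v * ((K.card.choose t : ℝ) / (K.card : ℝ) ^ t) := by
      rw [← sum_mul, hx1, one_mul, div_pow, one_pow, mul_one_div]
    _ ≤ _ := sum_le_sum fun v _ => by
      rw [mul_div_assoc]
      by_cases hv : v ∈ K
      · exact mul_le_mul_of_nonneg_left
          (choose_div_pow_monotone t (card_le_cliqueAt G hK hv)) (hx0 v)
      · simp [hxK v hv]
  unfold PhiFn
  linarith

theorem PhiFn_moveMass (x : Fin n → ℝ) {i j : Fin n} (hij : i ≠ j) (hadj : ¬G.Adj i j) :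
    (x i + x j) * PhiFn G t x =
      x i * PhiFn G t (moveMass x i j) + x j * PhiFn G t (moveMass x j i) := by
  have hvertex (v : Fin n) :
      (x i + x j) * x v = x i * moveMass x i j v + x j * moveMass x j i v := by
    simpa using add_mul_prod_eq_moveMass x (s := {v}) fun ⟨hi, hj⟩ =>
      hij ((mem_singleton.1 hi).trans (mem_singleton.1 hj).symm)
  have hlinear : (x i + x j) * ∑ v, x v * ((cliqueAt G v).choose t : ℝ) / (cliqueAt G v : ℝ) ^ t =
      x i * (∑ v, moveMass x i j v * ((cliqueAt G v).choose t : ℝ) / (cliqueAt G v : ℝ) ^ t) +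
        x j * ∑ v, moveMass x j i v * ((cliqueAt G v).choose t : ℝ) / (cliqueAt G v : ℝ) ^ t := by
    simp only [mul_sum, ← sum_add_distrib]
    refine sum_congr rfl fun v _ => ?_
    linear_combination (((cliqueAt G v).choose t : ℝ) / (cliqueAt G v : ℝ) ^ t) * hvertex v
  have hcliques : (x i + x j) * ∑ s ∈ ktCliques G t, ∏ v ∈ s, x v =
      x i * (∑ s ∈ ktCliques G t, ∏ v ∈ s, moveMass x i j v) +
        x j * ∑ s ∈ ktCliques G t, ∏ v ∈ s, moveMass x j i v := by
    simp only [mul_sum, ← sum_add_distrib]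
    exact sum_congr rfl fun s hs => add_mul_prod_eq_moveMass x fun ⟨hi, hj⟩ =>
      hadj (((mem_ktCliques G t).1 hs).2 hi hj hij)
  unfold PhiFn
  linear_combination hlinear - hcliques

theorem PhiFn_nonneg {x : Fin n → ℝ} (hx : x ∈ simplex n) : 0 ≤ PhiFn G t x := by
  suffices ∀ K : Finset (Fin n), ∀ x ∈ simplex n, (∀ v ∉ K, x v = 0) → 0 ≤ PhiFn G t x from
    this univ x hx (by simp)
  intro K
  induction K using Finset.strongInduction with | H K ih => ?_
  intro x hx hxK
  by_cases hK : G.IsClique (K : Set (Fin n))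
  · exact PhiFn_nonneg_of_isClique G t hK hx hxK
  obtain ⟨i, hi, j, hj, hij, hadj⟩ : ∃ i ∈ K, ∃ j ∈ K, i ≠ j ∧ ¬G.Adj i j := by
    simpa [SimpleGraph.IsClique, Set.Pairwise] using hK
  rcases (add_nonneg (hx.1 i) (hx.1 j)).eq_or_lt with hm | hm
  · refine ih _ (erase_ssubset hj) x hx fun v hv => ?_
    rcases eq_or_ne v j with rfl | hvj
    · linarith [hx.1 i, hx.1 v]
    · exact hxK v fun h => hv (mem_erase.2 ⟨hvj, h⟩)
  have hy := ih _ (erase_ssubset hj) _ (moveMass_mem_simplex hx hij)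
    (moveMass_eq_zero_of_notMem hxK hi j)
  have hz := ih _ (erase_ssubset hi) _ (moveMass_mem_simplex hx hij.symm)
    (moveMass_eq_zero_of_notMem hxK hj i)
  refine nonneg_of_mul_nonneg_right ?_ hm
  rw [PhiFn_moveMass G t x hij hadj]
  exact add_nonneg (mul_nonneg (hx.1 i) hy) (mul_nonneg (hx.1 j) hz)

theorem PhiFn_const (a : ℝ) :
    PhiFn G t (fun _ => a) =
      a * ∑ v, ((cliqueAt G v).choose t : ℝ) / (cliqueAt G v : ℝ) ^ t - numKt G t * a ^ t := by
  have hcliques : ∑ s ∈ ktCliques G t, ∏ _v ∈ s, a = (ktCliques G t).card * a ^ t := by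
    rw [sum_congr rfl fun s hs => by rw [prod_const, ((mem_ktCliques G t).1 hs).1], sum_const,
      nsmul_eq_mul]
  rw [PhiFn, numKt, hcliques, mul_sum]
  simp only [mul_div_assoc]

end Zykov

theorem stmt0_general {n : ℕ} (t : ℕ) (ht : 2 ≤ t) (G : SimpleGraph (Fin n)) :
    (numKt G t : ℝ) ≤
      (n : ℝ) ^ (t - 1) * ∑ v, ((cliqueAt G v).choose t : ℝ) / (cliqueAt G v : ℝ) ^ t := by
  obtain ⟨r, rfl⟩ : ∃ r, t = r + 1 := ⟨t - 1, by omega⟩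
  rcases n.eq_zero_or_pos with rfl | hn
  · simp [numKt, ktCliques, Subsingleton.elim _ (∅ : Finset (Fin 0))]
  have hn' : (0 : ℝ) < n := by exact_mod_cast hn
  have hx : (fun _ => (n : ℝ)⁻¹) ∈ simplex n := ⟨fun _ => by positivity, by simp [hn'.ne']⟩
  have h := PhiFn_nonneg G (r + 1) hx
  rw [PhiFn_const] at h
  rw [Nat.add_sub_cancel]
  set S := ∑ v, ((cliqueAt G v).choose (r + 1) : ℝ) / (cliqueAt G v : ℝ) ^ (r + 1)
  have h1 : (n : ℝ) ^ (r + 1) * (n : ℝ)⁻¹ = n ^ r := by rw [pow_succ, mul_inv_cancel_right₀ hn'.ne']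
  have h2 : (n : ℝ) ^ (r + 1) * (n : ℝ)⁻¹ ^ (r + 1) = 1 := by
    rw [← mul_pow, mul_inv_cancel₀ hn'.ne', one_pow]
  linear_combination (n : ℝ) ^ (r + 1) * h + S * h1 - (numKt G (r + 1) : ℝ) * h2

/-- Vertex-localized Zykov bound (Theorem of the paper, inequality part). -/
theorem stmt0 {n : ℕ} (t : ℕ) (ht : 2 ≤ t) (G : SimpleGraph (Fin n))
    (hc : ∀ v : Fin n, 1 ≤ cliqueAt G v) :
    (numKt G t : ℝ) ≤
      (n : ℝ) ^ (t - 1) * ∑ v, ((cliqueAt G v).choose t : ℝ) / (cliqueAt G v : ℝ) ^ t :=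
  stmt0_general t ht G
end

section
/- Let $t \ge 2$, let $G$ be a simple graph on $n$ vertices, and let $x \in \Delta^{n-1}$ be a minimizer of $\Phi(G,\cdot)$ over $\Delta^{n-1}$. If $i,j \in \operatorname{Supp}(x)$ and $i$ is not adjacent to $j$ in $G$, then $\delta_{ij}(x) = 0$. -/
open Finset
open scoped Classical

lemma sum_shift {n : ℕ} (x : Fin n → ℝ) (i j : Fin n) (hne : i ≠ j) (ε : ℝ)
    (f : Fin n → ℝ) :
    ∑ v, (if v = i then x i + ε else if v = j then x j - ε else x v) * f v
      = ∑ v, x v * f v + ε * (f i - f j) := by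
  have h : ∀ v, (if v = i then x i + ε else if v = j then x j - ε else x v) * f v
      = x v * f v + ((if v = i then ε * f v else 0) + (if v = j then -ε * f v else 0)) := by
    intro v
    by_cases h1 : v = i
    · subst h1; simp [hne]; ring
    · by_cases h2 : v = j
      · subst h2; simp [h1]; ring
      · simp [h1, h2]
  rw [Finset.sum_congr rfl (fun v _ => h v), Finset.sum_add_distrib,
    Finset.sum_add_distrib]
  simp [Finset.sum_ite_eq']
  ring

lemma erase_bij {n : ℕ} (G : SimpleGraph (Fin n)) (t : ℕ) (ht : 1 ≤ t)
    (i : Fin n) (x : Fin n → ℝ) :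
    ∑ s ∈ (ktCliques G t).filter (fun s => i ∈ s), ∏ v ∈ s.erase i, x v
      = ∑ s ∈ (ktCliques G (t-1)).filter (fun s => ∀ v ∈ s, G.Adj i v), ∏ v ∈ s, x v := by
  apply Finset.sum_nbij' (fun s => s.erase i) (fun s => insert i s)
  · intro s hs
    simp only [ktCliques, Finset.mem_filter, Finset.mem_univ, true_and] at hs ⊢
    obtain ⟨⟨hcard, hcl⟩, hi⟩ := hs
    refine ⟨⟨by rw [Finset.card_erase_of_mem hi, hcard], hcl.subset ?_⟩, ?_⟩
    · intro v hv
      simp only [Finset.coe_erase, Set.mem_diff] at hv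
      exact hv.1
    · intro v hv
      have hv' := Finset.mem_erase.mp hv
      exact hcl hi hv'.2 (Ne.symm hv'.1)
  · intro s hs
    simp only [ktCliques, Finset.mem_filter, Finset.mem_univ, true_and] at hs ⊢
    obtain ⟨⟨hcard, hcl⟩, hadj⟩ := hs
    have hni : i ∉ s := fun h => G.irrefl (hadj i h)
    refine ⟨⟨?_, ?_⟩, Finset.mem_insert_self i s⟩
    · rw [Finset.card_insert_of_notMem hni, hcard]; omega
    · rw [Finset.coe_insert]
      exact hcl.insert (fun v hv _ => hadj v hv)
  · intro s hs
    simp only [ktCliques, Finset.mem_filter] at hs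
    exact Finset.insert_erase hs.2
  · intro s hs
    simp only [ktCliques, Finset.mem_filter, Finset.mem_univ, true_and] at hs
    have hni : i ∉ s := fun h => G.irrefl (hs.2 i h)
    exact Finset.erase_insert hni
  · intro s hs; rfl

lemma phi_shift {n : ℕ} (G : SimpleGraph (Fin n)) (t : ℕ) (ht : 2 ≤ t)
    (x : Fin n → ℝ) (i j : Fin n) (hne : i ≠ j) (hij : ¬ G.Adj i j) (ε : ℝ) :
    PhiFn G t (fun v => if v = i then x i + ε else if v = j then x j - ε else x v)
      = PhiFn G t x + ε * deltaFn G t x i j := by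
  set y : Fin n → ℝ := fun v => if v = i then x i + ε else if v = j then x j - ε else x v
    with hy
  have hyi : y i = x i + ε := by simp [hy]
  have hyj : y j = x j - ε := by simp [hy, hne.symm, Ne.symm hne]
  have hyv : ∀ v, v ≠ i → v ≠ j → y v = x v := by intro v h1 h2; simp [hy, h1, h2]
  -- A-part
  have hA : ∑ v, y v * ((cliqueAt G v).choose t : ℝ) / (cliqueAt G v : ℝ) ^ t
      = (∑ v, x v * ((cliqueAt G v).choose t : ℝ) / (cliqueAt G v : ℝ) ^ t)
        + ε * (((cliqueAt G i).choose t : ℝ) / (cliqueAt G i : ℝ) ^ t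
          - ((cliqueAt G j).choose t : ℝ) / (cliqueAt G j : ℝ) ^ t) := by
    have h1 : ∀ z : Fin n → ℝ, ∀ v : Fin n,
        z v * ((cliqueAt G v).choose t : ℝ) / (cliqueAt G v : ℝ) ^ t
        = z v * (((cliqueAt G v).choose t : ℝ) / (cliqueAt G v : ℝ) ^ t) := by
      intro z v; ring
    calc ∑ v, y v * ((cliqueAt G v).choose t : ℝ) / (cliqueAt G v : ℝ) ^ t
        = ∑ v, y v * (((cliqueAt G v).choose t : ℝ) / (cliqueAt G v : ℝ) ^ t) := by
          exact Finset.sum_congr rfl (fun v _ => h1 y v)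
      _ = (∑ v, x v * (((cliqueAt G v).choose t : ℝ) / (cliqueAt G v : ℝ) ^ t))
            + ε * (((cliqueAt G i).choose t : ℝ) / (cliqueAt G i : ℝ) ^ t
              - ((cliqueAt G j).choose t : ℝ) / (cliqueAt G j : ℝ) ^ t) :=
          sum_shift x i j hne ε _
      _ = _ := by rw [Finset.sum_congr rfl (fun v _ => (h1 x v).symm)]
  -- B-part
  set T := ktCliques G t with hT
  have hTmem : ∀ s ∈ T, s.card = t ∧ G.IsClique (s : Set (Fin n)) := by
    intro s hs; simpa [hT, ktCliques] using hs
  have hnotboth : ∀ s ∈ T, i ∈ s → j ∉ s := by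
    intro s hs hiS hjS
    obtain ⟨hcard, hcl⟩ := hTmem s hs
    exact hij (hcl hiS hjS hne)
  -- products over cliques containing i
  have hprodi : ∀ z : Fin n → ℝ, ∀ s ∈ T.filter (fun s => i ∈ s),
      ∏ v ∈ s, z v = z i * ∏ v ∈ s.erase i, z v := by
    intro z s hs
    exact (Finset.mul_prod_erase s z (Finset.mem_filter.mp hs).2).symm
  have hprody_erase_i : ∀ s ∈ T.filter (fun s => i ∈ s),
      ∏ v ∈ s.erase i, y v = ∏ v ∈ s.erase i, x v := by
    intro s hs
    have hs' := Finset.mem_filter.mp hs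
    refine Finset.prod_congr rfl (fun v hv => ?_)
    have hv' := Finset.mem_erase.mp hv
    exact hyv v hv'.1 (fun h => hnotboth s hs'.1 hs'.2 (h ▸ hv'.2))
  have hprody_erase_j : ∀ s ∈ T.filter (fun s => j ∈ s),
      ∏ v ∈ s.erase j, y v = ∏ v ∈ s.erase j, x v := by
    intro s hs
    have hs' := Finset.mem_filter.mp hs
    refine Finset.prod_congr rfl (fun v hv => ?_)
    have hv' := Finset.mem_erase.mp hv
    refine hyv v (fun h => ?_) hv'.1
    exact hnotboth s hs'.1 (h ▸ hv'.2) hs'.2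
  -- split T three ways
  have hsplit : ∀ z : Fin n → ℝ, ∑ s ∈ T, ∏ v ∈ s, z v
      = (∑ s ∈ T.filter (fun s => i ∈ s), ∏ v ∈ s, z v)
        + ((∑ s ∈ (T.filter (fun s => ¬ i ∈ s)).filter (fun s => j ∈ s), ∏ v ∈ s, z v)
          + ∑ s ∈ (T.filter (fun s => ¬ i ∈ s)).filter (fun s => ¬ j ∈ s), ∏ v ∈ s, z v) := by
    intro z
    rw [← Finset.sum_filter_add_sum_filter_not T (fun s => i ∈ s),
      ← Finset.sum_filter_add_sum_filter_not (T.filter (fun s => ¬ i ∈ s)) (fun s => j ∈ s)]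
  have hTj : (T.filter (fun s => ¬ i ∈ s)).filter (fun s => j ∈ s)
      = T.filter (fun s => j ∈ s) := by
    ext s
    rw [Finset.mem_filter, Finset.mem_filter, Finset.mem_filter]
    constructor
    · rintro ⟨⟨h1, h2⟩, h3⟩; exact ⟨h1, h3⟩
    · rintro ⟨h1, h3⟩
      refine ⟨⟨h1, fun hiS => hnotboth s h1 hiS h3⟩, h3⟩
  -- sums over the three pieces
  have hBi : ∀ z : Fin n → ℝ, ∑ s ∈ T.filter (fun s => i ∈ s), ∏ v ∈ s, z v
      = z i * ∑ s ∈ T.filter (fun s => i ∈ s), ∏ v ∈ s.erase i, z v := by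
    intro z
    rw [Finset.mul_sum]
    exact Finset.sum_congr rfl (hprodi z)
  have hBj : ∀ z : Fin n → ℝ, ∑ s ∈ T.filter (fun s => j ∈ s), ∏ v ∈ s, z v
      = z j * ∑ s ∈ T.filter (fun s => j ∈ s), ∏ v ∈ s.erase j, z v := by
    intro z
    rw [Finset.mul_sum]
    refine Finset.sum_congr rfl (fun s hs => ?_)
    exact (Finset.mul_prod_erase s z (Finset.mem_filter.mp hs).2).symm
  have hrest : ∑ s ∈ (T.filter (fun s => ¬ i ∈ s)).filter (fun s => ¬ j ∈ s), ∏ v ∈ s, y v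
      = ∑ s ∈ (T.filter (fun s => ¬ i ∈ s)).filter (fun s => ¬ j ∈ s), ∏ v ∈ s, x v := by
    refine Finset.sum_congr rfl (fun s hs => ?_)
    simp only [Finset.mem_filter] at hs
    refine Finset.prod_congr rfl (fun v hv => ?_)
    exact hyv v (fun h => hs.1.2 (h ▸ hv)) (fun h => hs.2 (h ▸ hv))
  have hEi : ∑ s ∈ T.filter (fun s => i ∈ s), ∏ v ∈ s.erase i, y v
      = ∑ s ∈ T.filter (fun s => i ∈ s), ∏ v ∈ s.erase i, x v :=
    Finset.sum_congr rfl hprody_erase_i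
  have hEj : ∑ s ∈ T.filter (fun s => j ∈ s), ∏ v ∈ s.erase j, y v
      = ∑ s ∈ T.filter (fun s => j ∈ s), ∏ v ∈ s.erase j, x v :=
    Finset.sum_congr rfl hprody_erase_j
  have hB : ∑ s ∈ T, ∏ v ∈ s, y v
      = (∑ s ∈ T, ∏ v ∈ s, x v)
        + ε * ((∑ s ∈ T.filter (fun s => i ∈ s), ∏ v ∈ s.erase i, x v)
          - ∑ s ∈ T.filter (fun s => j ∈ s), ∏ v ∈ s.erase j, x v) := by
    rw [hsplit y, hsplit x, hTj, hBi y, hBi x, hBj y, hBj x, hrest, hEi, hEj, hyi, hyj]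
    ring
  have h1 : 1 ≤ t := by omega
  rw [PhiFn, PhiFn, hA, ← hT, hB, erase_bij G t h1 i x, erase_bij G t h1 j x, deltaFn]
  ring

/-- At a minimizer of `Φ(G, ·)`, `δ_{ij}(x) = 0` for non-adjacent `i, j` in the support. -/
theorem stmt4 {n : ℕ} (t : ℕ) (ht : 2 ≤ t) (G : SimpleGraph (Fin n))
    (x : Fin n → ℝ) (hx : IsMinimizer G t x) (i j : Fin n)
    (hi : i ∈ suppF x) (hj : j ∈ suppF x) (hij : ¬ G.Adj i j) :
    deltaFn G t x i j = 0 := by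
  classical
  rcases eq_or_ne i j with rfl | hne
  · simp [deltaFn]
  · have hxi : 0 < x i := (Finset.mem_filter.mp hi).2
    have hxj : 0 < x j := (Finset.mem_filter.mp hj).2
    obtain ⟨⟨hnn, hsum⟩, hmin⟩ := hx
    have hone : ∀ v : Fin n, x v * (1 : ℝ) = x v := fun v => mul_one _
    have hsum_shift : ∀ ε : ℝ,
        ∑ v, (if v = i then x i + ε else if v = j then x j - ε else x v) = 1 := by
      intro ε
      have := sum_shift x i j hne ε (fun _ => (1 : ℝ))
      simpa [hsum] using this
    -- ε = x j
    have h1 : 0 ≤ x j * deltaFn G t x i j := by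
      set y : Fin n → ℝ := fun v => if v = i then x i + x j else if v = j then x j - x j else x v
      have hy : y ∈ simplex n := by
        constructor
        · intro v
          by_cases h1 : v = i
          · simp only [y, h1, if_pos rfl]; positivity
          · by_cases h2 : v = j
            · show (0:ℝ) ≤ if v = i then x i + x j else if v = j then x j - x j else x v
              rw [if_neg h1, if_pos h2]; linarith
            · simpa [y, h1, h2] using hnn v
        · exact hsum_shift (x j)
      have := hmin y hy
      rw [phi_shift G t ht x i j hne hij (x j)] at this
      linarith
    -- ε = -(x i)
    have h2 : 0 ≤ -(x i) * deltaFn G t x i j := by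
      set y : Fin n → ℝ :=
        fun v => if v = i then x i + -(x i) else if v = j then x j - -(x i) else x v
      have hy : y ∈ simplex n := by
        constructor
        · intro v
          by_cases h1 : v = i
          · simp [y, h1]
          · by_cases h2 : v = j
            · show (0:ℝ) ≤ if v = i then x i + -(x i) else if v = j then x j - -(x i) else x v
              rw [if_neg h1, if_pos h2]; linarith
            · simpa [y, h1, h2] using hnn v
        · exact hsum_shift (-(x i))
      have := hmin y hy
      rw [phi_shift G t ht x i j hne hij (-(x i))] at this
      linarith
    nlinarith [h1, h2, hxi, hxj]
end

section
/- Let $t \ge 2$, let $G$ be a simple graph on $n$ vertices, and let $x \in \Delta^{n-1}$ be a minimizer of $\Phi(G,\cdot)$ over $\Delta^{n-1}$. If $i,j \in \operatorname{Supp}(x)$ and $i$ is not adjacent to $j$ in $G$, then both $y = x + x_j(e_i - e_j)$ and $y' = x + x_i(e_j - e_i)$ are also minimizers of $\Phi(G,\cdot)$ over $\Delta^{n-1}$. -/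
open Finset
open scoped Classical

/-- The `i`-th standard basis vector `e_i` of `ℝ^n`. -/
noncomputable def stdBasis (n : ℕ) (i : Fin n) : Fin n → ℝ := Pi.single i 1

lemma prod_affine {ι : Type*} [DecidableEq ι] (s : Finset ι) (x w : ι → ℝ)
    (hw : ∀ u ∈ s, ∀ v ∈ s, w u ≠ 0 → w v ≠ 0 → u = v) (ε : ℝ) :
    ∏ v ∈ s, (x v + ε * w v)
      = ∏ v ∈ s, x v + ε * ∑ u ∈ s, w u * ∏ v ∈ s.erase u, x v := by
  by_cases h : ∀ v ∈ s, w v = 0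
  · have hp : ∏ v ∈ s, (x v + ε * w v) = ∏ v ∈ s, x v :=
      Finset.prod_congr rfl (fun v hv => by simp [h v hv])
    have hs0 : ∑ u ∈ s, w u * ∏ v ∈ s.erase u, x v = 0 :=
      Finset.sum_eq_zero (fun u hu => by simp [h u hu])
    rw [hp, hs0]
    ring
  · push_neg at h
    obtain ⟨u, hu, hwu⟩ := h
    have h1 : ∏ v ∈ s, (x v + ε * w v) = (x u + ε * w u) * ∏ v ∈ s.erase u, x v := by
      rw [← Finset.mul_prod_erase s _ hu]
      congr 1
      apply Finset.prod_congr rfl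
      intro v hv
      have : w v = 0 := by
        by_contra hwv
        exact (Finset.mem_erase.mp hv).1 (hw v (Finset.mem_erase.mp hv).2 u hu hwv hwu)
      rw [this]; ring
    have h2 : ∑ u' ∈ s, w u' * ∏ v ∈ s.erase u', x v = w u * ∏ v ∈ s.erase u, x v := by
      apply Finset.sum_eq_single_of_mem u hu
      intro b hb hbu
      have : w b = 0 := by
        by_contra hwb
        exact hbu (hw b hb u hu hwb hwu)
      rw [this]; ring
    rw [h1, h2, ← Finset.mul_prod_erase s x hu]
    ring

lemma phi_affine {n : ℕ} (t : ℕ) (G : SimpleGraph (Fin n)) (x : Fin n → ℝ)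
    (i j : Fin n) (hne : i ≠ j) (hij : ¬ G.Adj i j) :
    ∃ D : ℝ, ∀ ε : ℝ,
      PhiFn G t (fun v => x v + ε * (stdBasis n i v - stdBasis n j v))
        = PhiFn G t x + ε * D := by
  classical
  set w : Fin n → ℝ := fun v => stdBasis n i v - stdBasis n j v with hw
  refine ⟨(∑ v, w v * (((cliqueAt G v).choose t : ℝ) / (cliqueAt G v : ℝ) ^ t))
    - ∑ s ∈ ktCliques G t, ∑ u ∈ s, w u * ∏ v ∈ s.erase u, x v, fun ε => ?_⟩
  have hwkey : ∀ s ∈ ktCliques G t, ∀ u ∈ s, ∀ v ∈ s, w u ≠ 0 → w v ≠ 0 → u = v := by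
    intro s hs u hu v hv hwu hwv
    have hclique : G.IsClique (s : Set (Fin n)) := (Finset.mem_filter.mp hs).2.2
    have hmem : ∀ a, w a ≠ 0 → a = i ∨ a = j := by
      intro a ha
      by_contra hcon
      push_neg at hcon
      apply ha
      simp [hw, stdBasis, Pi.single_apply, hcon.1, hcon.2]
    by_contra huv
    rcases hmem u hwu with h1 | h1 <;> rcases hmem v hwv with h2 | h2 <;>
      subst h1 <;> subst h2
    · exact huv rfl
    · exact hij (hclique (Finset.mem_coe.mpr hu) (Finset.mem_coe.mpr hv) hne)
    · exact hij (hclique (Finset.mem_coe.mpr hv) (Finset.mem_coe.mpr hu) hne)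
    · exact huv rfl
  unfold PhiFn
  rw [Finset.sum_congr rfl (fun s hs => prod_affine s x w (hwkey s hs) ε)]
  rw [Finset.sum_add_distrib, ← Finset.mul_sum]
  have hlin : ∑ v, (x v + ε * w v) * ((cliqueAt G v).choose t : ℝ) / (cliqueAt G v : ℝ) ^ t
      = (∑ v, x v * ((cliqueAt G v).choose t : ℝ) / (cliqueAt G v : ℝ) ^ t)
        + ε * ∑ v, w v * (((cliqueAt G v).choose t : ℝ) / (cliqueAt G v : ℝ) ^ t) := by
    rw [Finset.mul_sum, ← Finset.sum_add_distrib]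
    apply Finset.sum_congr rfl
    intro v _
    ring
  rw [hlin]
  ring

/-- Transferring all of one coordinate's weight to a non-adjacent support coordinate
preserves minimality (in both directions). -/
theorem stmt5 {n : ℕ} (t : ℕ) (ht : 2 ≤ t) (G : SimpleGraph (Fin n))
    (x : Fin n → ℝ) (hx : IsMinimizer G t x) (i j : Fin n)
    (hi : i ∈ suppF x) (hj : j ∈ suppF x) (hij : ¬ G.Adj i j) :
    IsMinimizer G t (fun v => x v + x j * (stdBasis n i v - stdBasis n j v)) ∧
      IsMinimizer G t
        (fun v => x v + x i * (stdBasis n j v - stdBasis n i v)) := by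
  classical
  obtain ⟨hxs, hxmin⟩ := hx
  have hxi : 0 < x i := (Finset.mem_filter.mp hi).2
  have hxj : 0 < x j := (Finset.mem_filter.mp hj).2
  by_cases hne : i = j
  · subst hne
    constructor <;>
      · refine ⟨?_, ?_⟩ <;> simp only [sub_self, mul_zero, add_zero] <;>
        first
          | exact hxs
          | exact hxmin
  · obtain ⟨D, hD⟩ := phi_affine t G x i j hne hij
    have hmem : ∀ ε : ℝ, -(x i) ≤ ε → ε ≤ x j →
        (fun v => x v + ε * (stdBasis n i v - stdBasis n j v)) ∈ simplex n := by
      intro ε h1 h2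
      constructor
      · intro v
        by_cases hvi : v = i
        · subst hvi
          simp only [stdBasis, Pi.single_apply, if_pos rfl, if_neg hne, if_true, ite_true]
          linarith
        by_cases hvj : v = j
        · subst hvj
          simp only [stdBasis, Pi.single_apply, if_neg (Ne.symm hne), if_pos rfl, if_true, ite_true]
          linarith
        · simp only [stdBasis, Pi.single_apply, if_neg hvi, if_neg hvj]
          have := hxs.1 v
          linarith
      · rw [Finset.sum_add_distrib, hxs.2, ← Finset.mul_sum]
        have hz : ∑ v, (stdBasis n i v - stdBasis n j v) = 0 := by
          rw [Finset.sum_sub_distrib]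
          simp [stdBasis, Pi.single_apply, Finset.sum_ite_eq']
        rw [hz, mul_zero, add_zero]
    have h1 := hxmin _ (hmem (x j) (by linarith) le_rfl)
    have h2 := hxmin _ (hmem (-(x i)) le_rfl (by linarith))
    rw [hD] at h1 h2
    have hD0 : D = 0 := by nlinarith
    constructor
    · refine ⟨hmem (x j) (by linarith) le_rfl, fun y hy => ?_⟩
      rw [hD, hD0, mul_zero, add_zero]
      exact hxmin y hy
    · have heq : (fun v => x v + x i * (stdBasis n j v - stdBasis n i v))
          = fun v => x v + (-(x i)) * (stdBasis n i v - stdBasis n j v) := by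
        funext v; ring
      rw [heq]
      refine ⟨hmem _ le_rfl (by linarith), fun y hy => ?_⟩
      rw [hD, hD0, mul_zero, add_zero]
      exact hxmin y hy
end

section
/- Let $t \ge 2$, let $G$ be a simple graph on $n$ vertices, and let $x \in \Delta^{n-1}$ be a minimizer of $\Phi(G,\cdot)$ over $\Delta^{n-1}$. Let $S \subseteq \operatorname{Supp}(x)$ be an independent set of $G$ and let $i \in S$. Then $z = x + \sum_{s \in S \setminus \{i\}} x_s(e_i - e_s)$ (i.e., the vector obtained by transferring all weight from the coordinates indexed by $S$ onto coordinate $i$) lies in $\Delta^{n-1}$ and is also a minimizer of $\Phi(G,\cdot)$. -/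
open Finset
open scoped Classical

lemma prod_add_linear {α : Type*} [DecidableEq α] (K : Finset α) (x d : α → ℝ) (ε : ℝ)
    (h : ∀ u ∈ K, ∀ w ∈ K, d u ≠ 0 → d w ≠ 0 → u = w) :
    ∏ v ∈ K, (x v + ε * d v) = ∏ v ∈ K, x v + ε * ∑ w ∈ K, d w * ∏ v ∈ K.erase w, x v := by
  by_cases hall : ∀ v ∈ K, d v = 0
  · rw [Finset.prod_congr rfl fun v hv => by rw [hall v hv, mul_zero, add_zero],
      Finset.sum_eq_zero fun w hw => by rw [hall w hw, zero_mul]]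
    ring
  · push_neg at hall
    obtain ⟨w, hwK, hw⟩ := hall
    have hzero : ∀ v ∈ K, v ≠ w → d v = 0 := fun v hv hvw => by
      by_contra hdv; exact hvw (h v hv w hwK hdv hw)
    have e1 : ∏ v ∈ K, (x v + ε * d v) = (x w + ε * d w) * ∏ v ∈ K.erase w, x v := by
      rw [← Finset.mul_prod_erase K _ hwK]
      congr 1
      exact Finset.prod_congr rfl fun v hv => by
        rw [hzero v (Finset.mem_of_mem_erase hv) (Finset.ne_of_mem_erase hv), mul_zero, add_zero]
    have e2 : ∏ v ∈ K, x v = x w * ∏ v ∈ K.erase w, x v :=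
      (Finset.mul_prod_erase K x hwK).symm
    have e3 : ∑ w' ∈ K, d w' * ∏ v ∈ K.erase w', x v = d w * ∏ v ∈ K.erase w, x v :=
      Finset.sum_eq_single_of_mem w hwK fun b hb hbw => by rw [hzero b hb hbw, zero_mul]
    rw [e1, e2, e3]; ring

lemma phi_affine_s6 {n : ℕ} (G : SimpleGraph (Fin n)) (t : ℕ) (x d : Fin n → ℝ)
    (hone : ∀ K ∈ ktCliques G t, ∀ u ∈ K, ∀ w ∈ K, d u ≠ 0 → d w ≠ 0 → u = w) (ε : ℝ) :
    PhiFn G t (fun v => x v + ε * d v) =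
      PhiFn G t x + ε * ((∑ v, d v * ((cliqueAt G v).choose t : ℝ) / (cliqueAt G v : ℝ) ^ t)
        - ∑ K ∈ ktCliques G t, ∑ w ∈ K, d w * ∏ v ∈ K.erase w, x v) := by
  unfold PhiFn
  rw [Finset.sum_congr rfl fun K (hK : K ∈ ktCliques G t) =>
    prod_add_linear K x d ε (hone K hK)]
  have h1 : ∑ v, (x v + ε * d v) * ((cliqueAt G v).choose t : ℝ) / (cliqueAt G v : ℝ) ^ t
      = (∑ v, x v * ((cliqueAt G v).choose t : ℝ) / (cliqueAt G v : ℝ) ^ t)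
        + ε * ∑ v, d v * ((cliqueAt G v).choose t : ℝ) / (cliqueAt G v : ℝ) ^ t := by
    rw [Finset.mul_sum, ← Finset.sum_add_distrib]
    exact Finset.sum_congr rfl fun v _ => by ring
  have h2 : ∑ K ∈ ktCliques G t, (∏ v ∈ K, x v + ε * ∑ w ∈ K, d w * ∏ v ∈ K.erase w, x v)
      = (∑ K ∈ ktCliques G t, ∏ v ∈ K, x v)
        + ε * ∑ K ∈ ktCliques G t, ∑ w ∈ K, d w * ∏ v ∈ K.erase w, x v := by
    rw [Finset.mul_sum, ← Finset.sum_add_distrib]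
  rw [h1, h2]; ring

lemma key_transfer {n : ℕ} (G : SimpleGraph (Fin n)) (t : ℕ) (x : Fin n → ℝ)
    (hx : IsMinimizer G t x) (d : Fin n → ℝ)
    (hdsum : ∑ v, d v = 0)
    (hone : ∀ K ∈ ktCliques G t, ∀ u ∈ K, ∀ w ∈ K, d u ≠ 0 → d w ≠ 0 → u = w)
    (hpos1 : ∀ v, 0 ≤ x v + d v)
    (hpos2 : ∃ ε > 0, ∀ v, 0 ≤ x v - ε * d v) :
    (fun v => x v + d v) ∈ simplex n ∧ IsMinimizer G t (fun v => x v + d v) := by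
  obtain ⟨⟨hx0, hx1⟩, hxmin⟩ := hx
  obtain ⟨ε, hε, hp2⟩ := hpos2
  have hmem1 : (fun v => x v + d v) ∈ simplex n := by
    refine ⟨hpos1, ?_⟩
    rw [Finset.sum_add_distrib, hx1, hdsum, add_zero]
  have hmem2 : (fun v => x v + (-ε) * d v) ∈ simplex n := by
    constructor
    · intro v
      have := hp2 v
      simp only [neg_mul]
      linarith
    · rw [Finset.sum_add_distrib, hx1, ← Finset.mul_sum, hdsum, mul_zero, add_zero]
  have haff := phi_affine_s6 G t x d hone
  have e1 : (fun v => x v + d v) = fun v => x v + 1 * d v := by funext v; ring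
  have h1 := hxmin _ hmem1
  have h2 := hxmin _ hmem2
  rw [haff (-ε)] at h2
  rw [e1, haff 1] at h1
  set c : ℝ := (∑ v, d v * ((cliqueAt G v).choose t : ℝ) / (cliqueAt G v : ℝ) ^ t)
      - ∑ K ∈ ktCliques G t, ∑ w ∈ K, d w * ∏ v ∈ K.erase w, x v with hc
  have hc1 : 0 ≤ c := by linarith
  have hc2 : c ≤ 0 := by nlinarith
  have hc0 : c = 0 := le_antisymm hc2 hc1
  have heq : PhiFn G t (fun v => x v + d v) = PhiFn G t x := by
    rw [e1, haff 1, hc0]; ring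
  exact ⟨hmem1, hmem1, fun y hy => heq ▸ hxmin y hy⟩

/-- Transferring the total weight of an independent subset `S` of the support onto one of
its vertices stays in the simplex and preserves minimality. -/
theorem stmt6 {n : ℕ} (t : ℕ) (ht : 2 ≤ t) (G : SimpleGraph (Fin n))
    (x : Fin n → ℝ) (hx : IsMinimizer G t x) (S : Finset (Fin n)) (hS : S ⊆ suppF x)
    (hind : ∀ u ∈ S, ∀ v ∈ S, ¬ G.Adj u v) (i : Fin n) (hiS : i ∈ S) :
    (fun v => x v + ∑ s ∈ S.erase i, x s * (stdBasis n i v - stdBasis n s v))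
        ∈ simplex n ∧
      IsMinimizer G t
        (fun v => x v +
          ∑ s ∈ S.erase i, x s * (stdBasis n i v - stdBasis n s v)) := by
  classical
  have hx0 : ∀ v, 0 ≤ x v := hx.1.1
  have hxi : 0 < x i := by have h := hS hiS; simpa [suppF] using h
  set d : Fin n → ℝ := fun v => ∑ s ∈ S.erase i, x s * (stdBasis n i v - stdBasis n s v)
    with hdd
  have hd0 : ∀ v, v ∉ S → d v = 0 := by
    intro v hv
    apply Finset.sum_eq_zero
    intro s hs
    have hvi : v ≠ i := fun h => hv (h ▸ hiS)
    have hvs : v ≠ s := fun h => hv (h ▸ Finset.mem_of_mem_erase hs)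
    simp [stdBasis, Pi.single_eq_of_ne hvi, Pi.single_eq_of_ne hvs]
  have hdi : d i = ∑ s ∈ S.erase i, x s := by
    apply Finset.sum_congr rfl
    intro s hs
    have his : i ≠ s := (Finset.ne_of_mem_erase hs).symm
    simp [stdBasis, Pi.single_eq_same, Pi.single_eq_of_ne his]
  have hds : ∀ v ∈ S.erase i, d v = -x v := by
    intro v hv
    have hvi : v ≠ i := Finset.ne_of_mem_erase hv
    show (∑ s ∈ S.erase i, x s * (stdBasis n i v - stdBasis n s v)) = -x v
    rw [Finset.sum_eq_single_of_mem v hv (fun b hb hbv => by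
      simp [stdBasis, Pi.single_eq_of_ne hvi, Pi.single_eq_of_ne (Ne.symm hbv)])]
    simp [stdBasis, Pi.single_eq_of_ne hvi, Pi.single_eq_same]
  have hD : (0:ℝ) ≤ ∑ s ∈ S.erase i, x s := Finset.sum_nonneg fun s _ => hx0 s
  have hdsum : ∑ v, d v = 0 := by
    show (∑ v, ∑ s ∈ S.erase i, x s * (stdBasis n i v - stdBasis n s v)) = 0
    rw [Finset.sum_comm]
    apply Finset.sum_eq_zero
    intro s hs
    rw [← Finset.mul_sum, Finset.sum_sub_distrib]
    simp [stdBasis, Finset.sum_pi_single']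
  have hone : ∀ K ∈ ktCliques G t, ∀ u ∈ K, ∀ w ∈ K, d u ≠ 0 → d w ≠ 0 → u = w := by
    intro K hK u hu w hw hdu hdw
    by_contra huw
    have hKc : G.IsClique (K : Set (Fin n)) := by
      simp only [ktCliques, Finset.mem_filter] at hK; exact hK.2.2
    have huS : u ∈ S := by by_contra h; exact hdu (hd0 u h)
    have hwS : w ∈ S := by by_contra h; exact hdw (hd0 w h)
    exact hind u huS w hwS (hKc (by simpa using hu) (by simpa using hw) huw)
  have hpos1 : ∀ v, 0 ≤ x v + d v := by
    intro v
    by_cases hvS : v ∈ S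
    · by_cases hvi : v = i
      · subst hvi; rw [hdi]; linarith
      · rw [hds v (Finset.mem_erase.mpr ⟨hvi, hvS⟩)]; simp
    · rw [hd0 v hvS]; simpa using hx0 v
  have hpos2 : ∃ ε > 0, ∀ v, 0 ≤ x v - ε * d v := by
    set D := ∑ s ∈ S.erase i, x s with hDdef
    refine ⟨x i / (D + 1), div_pos hxi (by linarith), ?_⟩
    intro v
    by_cases hvS : v ∈ S
    · by_cases hvi : v = i
      · subst hvi
        rw [hdi]
        have hle : x v / (D + 1) * D ≤ x v := by
          rw [div_mul_eq_mul_div, div_le_iff₀ (by linarith : (0:ℝ) < D + 1)]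
          nlinarith
        linarith
      · rw [hds v (Finset.mem_erase.mpr ⟨hvi, hvS⟩)]
        have hε : 0 ≤ x i / (D + 1) := le_of_lt (div_pos hxi (by linarith))
        nlinarith [hx0 v]
    · rw [hd0 v hvS]; simpa using hx0 v
  exact key_transfer G t x hx d hdsum hone hpos1 hpos2
end

section
/- Let $t \ge 2$ and $r \ge 1$, and let $G$ be a $K_{r+1}$-free simple graph on $n$ vertices in which every vertex is contained in some clique (so $c(v) \ge 1$). Then $n^{t-1} \sum_{v \in V(G)} \frac{1}{c(v)^t}\binom{c(v)}{t} \le \binom{r}{t}\left(\frac{n}{r}\right)^t$. (Hence the vertex-localized bound implies Zykov's bound.) -/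
open Finset
open scoped Classical

lemma cliqueAt_le {n r : ℕ} (G : SimpleGraph (Fin n)) (hfree : G.CliqueFree (r + 1))
    (v : Fin n) : cliqueAt G v ≤ r := by
  apply Finset.sup_le
  intro s hs
  simp only [Finset.mem_filter] at hs
  by_contra h
  push_neg at h
  obtain ⟨u, hu, hcard⟩ := s.exists_subset_card_eq (by omega : r + 1 ≤ s.card)
  exact hfree u ⟨hs.2.1.subset (Finset.coe_subset.mpr hu), hcard⟩

lemma key_nat (t c r : ℕ) (hcr : c ≤ r) :
    c.choose t * r ^ t ≤ r.choose t * c ^ t := by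
  have hfac : 0 < t.factorial := t.factorial_pos
  have hdesc : c.descFactorial t * r ^ t ≤ r.descFactorial t * c ^ t := by
    rw [Nat.descFactorial_eq_prod_range, Nat.descFactorial_eq_prod_range]
    have h1 : r ^ t = ∏ _i ∈ Finset.range t, r := by simp
    have h2 : c ^ t = ∏ _i ∈ Finset.range t, c := by simp
    rw [h1, h2, ← Finset.prod_mul_distrib, ← Finset.prod_mul_distrib]
    apply Finset.prod_le_prod'
    intro i _
    calc (c - i) * r = c * r - i * r := Nat.sub_mul _ _ _
      _ ≤ c * r - i * c := Nat.sub_le_sub_left (Nat.mul_le_mul_left i hcr) _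
      _ = (r - i) * c := by rw [Nat.sub_mul, Nat.mul_comm c r]
  have heq : ∀ m p : ℕ, t.factorial * (m.choose t * p) = m.descFactorial t * p := by
    intro m p
    rw [← Nat.mul_assoc, ← Nat.descFactorial_eq_factorial_mul_choose]
  have this : t.factorial * (c.choose t * r ^ t) ≤ t.factorial * (r.choose t * c ^ t) := by
    rw [heq, heq]; exact hdesc
  exact Nat.le_of_mul_le_mul_left this hfac

lemma key_real (t c r : ℕ) (hc : 1 ≤ c) (hr : 1 ≤ r) (hcr : c ≤ r) :
    (c.choose t : ℝ) / (c : ℝ) ^ t ≤ (r.choose t : ℝ) / (r : ℝ) ^ t := by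
  have hc0 : (0 : ℝ) < c := by exact_mod_cast hc
  have hr0 : (0 : ℝ) < r := by exact_mod_cast hr
  rw [div_le_div_iff₀ (by positivity) (by positivity)]
  exact_mod_cast key_nat t c r hcr

/-- For `K_{r+1}`-free graphs, the vertex-localized bound is at most Zykov's bound. -/
theorem stmt13 {n : ℕ} (t r : ℕ) (ht : 2 ≤ t) (hr : 1 ≤ r) (G : SimpleGraph (Fin n))
    (hfree : G.CliqueFree (r + 1)) (hc : ∀ v : Fin n, 1 ≤ cliqueAt G v) :
    (n : ℝ) ^ (t - 1) * ∑ v, ((cliqueAt G v).choose t : ℝ) / (cliqueAt G v : ℝ) ^ t ≤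
      (r.choose t : ℝ) * ((n : ℝ) / (r : ℝ)) ^ t := by
  have hsum : ∑ v, ((cliqueAt G v).choose t : ℝ) / (cliqueAt G v : ℝ) ^ t
      ≤ (n : ℝ) * ((r.choose t : ℝ) / (r : ℝ) ^ t) := by
    calc ∑ v, ((cliqueAt G v).choose t : ℝ) / (cliqueAt G v : ℝ) ^ t
        ≤ ∑ _v : Fin n, ((r.choose t : ℝ) / (r : ℝ) ^ t) :=
          Finset.sum_le_sum (fun v _ =>
            key_real t (cliqueAt G v) r (hc v) hr (cliqueAt_le G hfree v))
      _ = (n : ℝ) * ((r.choose t : ℝ) / (r : ℝ) ^ t) := by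
          simp [Finset.sum_const, Finset.card_univ, mul_comm]
  have hn : (0 : ℝ) ≤ (n : ℝ) ^ (t - 1) := by positivity
  have hpow : (n : ℝ) ^ (t - 1) * (n : ℝ) = (n : ℝ) ^ t := by
    rw [← pow_succ]; congr 1; omega
  calc (n : ℝ) ^ (t - 1) * ∑ v, ((cliqueAt G v).choose t : ℝ) / (cliqueAt G v : ℝ) ^ t
      ≤ (n : ℝ) ^ (t - 1) * ((n : ℝ) * ((r.choose t : ℝ) / (r : ℝ) ^ t)) :=
        mul_le_mul_of_nonneg_left hsum hn
    _ = (r.choose t : ℝ) * ((n : ℝ) / (r : ℝ)) ^ t := by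
        rw [div_pow, ← mul_assoc, hpow]; ring
end

section
/- Let $G$ be a simple graph on $n$ vertices with $m$ edges, and for each vertex $v$ let $c(v)$ denote the order of the largest clique of $G$ containing $v$ (assume $c(v) \ge 1$ for all $v$). Then $m \le \left\lfloor \frac{n}{2} \sum_{v \in V(G)} \frac{c(v)-1}{c(v)} \right\rfloor$. -/
open Finset
open scoped Classical

namespace LocalTuran

variable {n : ℕ}

noncomputable def eW (G : SimpleGraph (Fin n)) (u v : Fin n) : ℝ :=
  if G.Adj u v then 1 else 0

noncomputable def Bf (G : SimpleGraph (Fin n)) (p q : Fin n → ℝ) : ℝ :=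
  ∑ u, ∑ v, eW G u v * p u * q v

noncomputable def Af (G : SimpleGraph (Fin n)) (x : Fin n → ℝ) : ℝ :=
  ∑ v, ((cliqueAt G v : ℝ) - 1) / (cliqueAt G v : ℝ) * x v

noncomputable def dl (i : Fin n) : Fin n → ℝ := fun v => if v = i then 1 else 0

lemma eW_symm (G : SimpleGraph (Fin n)) (u v : Fin n) : eW G u v = eW G v u := by
  simp [eW, SimpleGraph.adj_comm]

lemma eW_self (G : SimpleGraph (Fin n)) (u : Fin n) : eW G u u = 0 := by
  simp [eW]

lemma Bf_symm (G : SimpleGraph (Fin n)) (p q : Fin n → ℝ) : Bf G p q = Bf G q p := by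
  unfold Bf
  rw [Finset.sum_comm]
  refine Finset.sum_congr rfl fun u _ => Finset.sum_congr rfl fun v _ => ?_
  rw [eW_symm]; ring

lemma Bf_add_left (G : SimpleGraph (Fin n)) (p q r : Fin n → ℝ) :
    Bf G (fun v => p v + q v) r = Bf G p r + Bf G q r := by
  unfold Bf
  rw [← Finset.sum_add_distrib]
  refine Finset.sum_congr rfl fun u _ => ?_
  rw [← Finset.sum_add_distrib]
  exact Finset.sum_congr rfl fun v _ => by ring

lemma Bf_add_right (G : SimpleGraph (Fin n)) (p q r : Fin n → ℝ) :
    Bf G r (fun v => p v + q v) = Bf G r p + Bf G r q := by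
  rw [Bf_symm, Bf_add_left, Bf_symm G p r, Bf_symm G q r]

lemma Bf_smul_left (G : SimpleGraph (Fin n)) (c : ℝ) (p r : Fin n → ℝ) :
    Bf G (fun v => c * p v) r = c * Bf G p r := by
  unfold Bf
  rw [Finset.mul_sum]
  refine Finset.sum_congr rfl fun u _ => ?_
  rw [Finset.mul_sum]
  exact Finset.sum_congr rfl fun v _ => by ring

lemma Bf_smul_right (G : SimpleGraph (Fin n)) (c : ℝ) (p r : Fin n → ℝ) :
    Bf G r (fun v => c * p v) = c * Bf G r p := by
  rw [Bf_symm, Bf_smul_left, Bf_symm G p r]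

lemma Bf_dl_left (G : SimpleGraph (Fin n)) (i : Fin n) (p : Fin n → ℝ) :
    Bf G (dl i) p = ∑ v, eW G i v * p v := by
  unfold Bf dl
  rw [Finset.sum_eq_single_of_mem i (Finset.mem_univ i)]
  · simp
  · intro u _ hu
    simp [hu]

lemma Bf_dl_dl (G : SimpleGraph (Fin n)) (i j : Fin n) :
    Bf G (dl i) (dl j) = eW G i j := by
  rw [Bf_dl_left]
  unfold dl
  rw [Finset.sum_eq_single_of_mem j (Finset.mem_univ j)]
  · simp
  · intro u _ hu
    simp [hu]

lemma sum_dl (i : Fin n) : ∑ v, dl i v = 1 := by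
  unfold dl
  simp

lemma Af_add (G : SimpleGraph (Fin n)) (p q : Fin n → ℝ) :
    Af G (fun v => p v + q v) = Af G p + Af G q := by
  unfold Af
  rw [← Finset.sum_add_distrib]
  exact Finset.sum_congr rfl fun v _ => by ring

lemma Af_smul (G : SimpleGraph (Fin n)) (c : ℝ) (p : Fin n → ℝ) :
    Af G (fun v => c * p v) = c * Af G p := by
  unfold Af
  rw [Finset.mul_sum]
  exact Finset.sum_congr rfl fun v _ => by ring

lemma Af_dl (G : SimpleGraph (Fin n)) (i : Fin n) :
    Af G (dl i) = ((cliqueAt G i : ℝ) - 1) / (cliqueAt G i : ℝ) := by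
  unfold Af dl
  rw [Finset.sum_eq_single_of_mem i (Finset.mem_univ i)]
  · simp
  · intro u _ hu
    simp [hu]

lemma Q_comb (G : SimpleGraph (Fin n)) (x0 : Fin n → ℝ) (a b : ℝ) (i j : Fin n)
    (hne : ¬ G.Adj i j) :
    Bf G (fun v => x0 v + (a * dl i v + b * dl j v))
        (fun v => x0 v + (a * dl i v + b * dl j v))
      = Bf G x0 x0 + 2 * a * Bf G (dl i) x0 + 2 * b * Bf G (dl j) x0 := by
  have hij : eW G i j = 0 := by simp [eW, hne]
  have hji : eW G j i = 0 := by rw [eW_symm]; exact hij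
  simp only [Bf_add_left, Bf_add_right, Bf_smul_left, Bf_smul_right, Bf_dl_dl,
    eW_self, hij, hji, Bf_symm G x0 (dl i), Bf_symm G x0 (dl j)]
  ring

lemma A_comb (G : SimpleGraph (Fin n)) (x0 : Fin n → ℝ) (a b : ℝ) (i j : Fin n) :
    Af G (fun v => x0 v + (a * dl i v + b * dl j v))
      = Af G x0 + a * Af G (dl i) + b * Af G (dl j) := by
  rw [Af_add, Af_add, Af_smul, Af_smul]; ring

noncomputable def zer (i j : Fin n) (x : Fin n → ℝ) : Fin n → ℝ :=
  fun v => if v = i ∨ v = j then 0 else x v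

lemma x_eq_comb (i j : Fin n) (hij : i ≠ j) (x : Fin n → ℝ) :
    x = fun v => zer i j x v + (x i * dl i v + x j * dl j v) := by
  funext v
  unfold zer dl
  by_cases hvi : v = i
  · subst hvi
    simp [hij]
  · by_cases hvj : v = j
    · subst hvj
      simp [hvi]
    · simp [hvi, hvj]

lemma step (G : SimpleGraph (Fin n)) (x : Fin n → ℝ) (i j : Fin n) (hij : i ≠ j)
    (hne : ¬ G.Adj i j) (hpos : ∀ v, 0 ≤ x v) (hxi : 0 < x i)
    (hg : Af G (dl i) - 2 * Bf G (dl i) (zer i j x)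
        ≤ Af G (dl j) - 2 * Bf G (dl j) (zer i j x)) :
    ∃ y : Fin n → ℝ, (∀ v, 0 ≤ y v) ∧ (∑ v, y v = ∑ v, x v) ∧
      suppF y ⊆ (suppF x).erase j ∧
      Af G x - Bf G x x ≥ Af G y - Bf G y y := by
  set x0 := zer i j x with hx0
  set y : Fin n → ℝ := fun v => x0 v + ((x i + x j) * dl i v + 0 * dl j v) with hy
  have hx0nn : ∀ v, 0 ≤ x0 v := by
    intro v
    unfold x0
    unfold zer
    by_cases h : v = i ∨ v = j <;> simp [h, hpos v]
  refine ⟨y, ?_, ?_, ?_, ?_⟩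
  · intro v
    have h1 : 0 ≤ dl i v := by unfold dl; by_cases h : v = i <;> simp [h]
    have h2 : 0 ≤ (x i + x j) := by have := hpos i; have := hpos j; linarith
    have := hx0nn v
    simp only [hy]
    nlinarith
  · rw [hy]
    conv_rhs => rw [x_eq_comb i j hij x]
    rw [Finset.sum_add_distrib, Finset.sum_add_distrib, Finset.sum_add_distrib,
      Finset.sum_add_distrib, ← Finset.mul_sum, ← Finset.mul_sum, ← Finset.mul_sum,
      ← Finset.mul_sum, sum_dl, sum_dl]
    ring
  · intro v hv
    have hv' : 0 < y v := by
      simpa [suppF] using hv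
    rw [Finset.mem_erase]
    by_cases hvj : v = j
    · exfalso
      subst hvj
      have : y v = 0 := by
        simp only [hy]
        unfold x0
        unfold zer dl
        simp [hij, Ne.symm hij]
      rw [this] at hv'
      exact lt_irrefl _ hv'
    · refine ⟨hvj, ?_⟩
      simp only [suppF, Finset.mem_filter, Finset.mem_univ, true_and]
      by_cases hvi : v = i
      · subst hvi; exact hxi
      · have : y v = x v := by
          simp only [hy]
          unfold x0
          unfold zer dl
          simp [hvi, hvj]
        rwa [this] at hv'
  · have hQx : Bf G x x = Bf G x0 x0 + 2 * (x i) * Bf G (dl i) x0 + 2 * (x j) * Bf G (dl j) x0 := by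
      conv_lhs => rw [x_eq_comb i j hij x]
      exact Q_comb G x0 (x i) (x j) i j hne
    have hAx : Af G x = Af G x0 + (x i) * Af G (dl i) + (x j) * Af G (dl j) := by
      conv_lhs => rw [x_eq_comb i j hij x]
      exact A_comb G x0 (x i) (x j) i j
    have hQy : Bf G y y = Bf G x0 x0 + 2 * (x i + x j) * Bf G (dl i) x0 + 2 * 0 * Bf G (dl j) x0 :=
      Q_comb G x0 (x i + x j) 0 i j hne
    have hAy : Af G y = Af G x0 + (x i + x j) * Af G (dl i) + 0 * Af G (dl j) :=
      A_comb G x0 (x i + x j) 0 i j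
    have hj0 : 0 ≤ x j := hpos j
    nlinarith [mul_nonneg hj0 (sub_nonneg.mpr hg)]

lemma supp_sum (x : Fin n → ℝ) (hpos : ∀ v, 0 ≤ x v) :
    ∑ v ∈ suppF x, x v = ∑ v, x v := by
  refine Finset.sum_subset (Finset.subset_univ _) ?_
  intro v _ hv
  have : ¬ 0 < x v := by simpa [suppF] using hv
  linarith [hpos v, not_lt.mp this]

lemma key (G : SimpleGraph (Fin n)) :
    ∀ k : ℕ, ∀ x : Fin n → ℝ, (suppF x).card ≤ k → (∀ v, 0 ≤ x v) → (∑ v, x v = 1) →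
      Bf G x x ≤ Af G x := by
  intro k
  induction k with
  | zero =>
    intro x hcard hpos hsum
    exfalso
    have hS : suppF x = ∅ := Finset.card_eq_zero.mp (Nat.le_zero.mp hcard)
    have : ∑ v ∈ suppF x, x v = 1 := by rw [supp_sum x hpos, hsum]
    rw [hS] at this
    simpa using this
  | succ k ih =>
    intro x hcard hpos hsum
    by_cases hcl : ∀ u ∈ suppF x, ∀ v ∈ suppF x, u ≠ v → G.Adj u v
    · -- support is a clique
      set S := suppF x with hSdef
      have hSsum : ∑ v ∈ S, x v = 1 := by rw [supp_sum x hpos, hsum]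
      have hSne : S.Nonempty := by
        rcases S.eq_empty_or_nonempty with h | h
        · exfalso; rw [h] at hSsum; simpa using hSsum
        · exact h
      have hk0 : 0 < S.card := Finset.card_pos.mpr hSne
      have hclique : G.IsClique (S : Set (Fin n)) := by
        intro u hu v hv huv
        exact hcl u (by simpa using hu) v (by simpa using hv) huv
      have hcv : ∀ v ∈ S, (S.card : ℝ) ≤ (cliqueAt G v : ℝ) := by
        intro v hv
        have : S.card ≤ cliqueAt G v := by
          refine Finset.le_sup (f := Finset.card) ?_
          simp only [Finset.mem_filter, Finset.mem_univ, true_and]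
          exact ⟨hclique, hv⟩
        exact_mod_cast this
      -- bound B
      have hB : Bf G x x ≤ 1 - ∑ v, (x v) ^ 2 := by
        have h1 : Bf G x x ≤ ∑ u, ∑ v, (if u = v then 0 else x u * x v) := by
          refine Finset.sum_le_sum fun u _ => Finset.sum_le_sum fun v _ => ?_
          by_cases huv : u = v
          · subst huv; rw [eW_self]; simp
          · rw [if_neg huv]
            unfold eW
            by_cases h : G.Adj u v
            · rw [if_pos h]; ring_nf; exact le_refl _
            · rw [if_neg h]
              have := mul_nonneg (hpos u) (hpos v)
              nlinarith
        have h2 : ∀ u : Fin n, ∑ v, (if u = v then 0 else x u * x v)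
            = x u * (∑ v, x v) - x u * x u := by
          intro u
          have e1 : ∑ v, (if u = v then x u * x v else 0) = x u * x u := by
            rw [Finset.sum_ite_eq]; simp
          have e2 : ∑ v, x u * x v
              = ∑ v, ((if u = v then 0 else x u * x v) + (if u = v then x u * x v else 0)) := by
            refine Finset.sum_congr rfl fun v _ => ?_
            by_cases h : u = v <;> simp [h]
          have e3 : (∑ v, (if u = v then 0 else x u * x v))
              = (∑ v, x u * x v) - x u * x u := by
            rw [e2, Finset.sum_add_distrib, e1]; ring
          rw [e3, Finset.mul_sum]
        calc Bf G x x ≤ ∑ u, ∑ v, (if u = v then 0 else x u * x v) := h1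
          _ = ∑ u, (x u * (∑ v, x v) - x u * x u) := Finset.sum_congr rfl fun u _ => h2 u
          _ = (∑ u, x u) * (∑ v, x v) - ∑ u, (x u) ^ 2 := by
              rw [Finset.sum_sub_distrib, ← Finset.sum_mul]
              congr 1
              exact Finset.sum_congr rfl fun u _ => by ring
          _ = 1 - ∑ v, (x v) ^ 2 := by rw [hsum]; norm_num
      -- Cauchy-Schwarz
      have hCS : 1 ≤ (S.card : ℝ) * ∑ v, (x v) ^ 2 := by
        have h1 : (∑ v ∈ S, x v) ^ 2 ≤ (S.card : ℝ) * ∑ v ∈ S, (x v) ^ 2 := by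
          exact_mod_cast sq_sum_le_card_mul_sum_sq (s := S) (f := x)
        have h2 : ∑ v ∈ S, (x v) ^ 2 ≤ ∑ v, (x v) ^ 2 :=
          Finset.sum_le_sum_of_subset_of_nonneg (Finset.subset_univ _)
            (fun v _ _ => sq_nonneg _)
        rw [hSsum] at h1
        have hknn : (0 : ℝ) ≤ (S.card : ℝ) := by positivity
        nlinarith
      -- bound A
      have hA : 1 - 1 / (S.card : ℝ) ≤ Af G x := by
        have hterm : ∀ v : Fin n,
            (1 - 1 / (S.card : ℝ)) * x v
              ≤ ((cliqueAt G v : ℝ) - 1) / (cliqueAt G v : ℝ) * x v := by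
          intro v
          by_cases hv : v ∈ S
          · have hcpos : (0 : ℝ) < (cliqueAt G v : ℝ) := by
              have := hcv v hv
              have : (0 : ℝ) < (S.card : ℝ) := by exact_mod_cast hk0
              linarith [hcv v hv]
            have hkpos : (0 : ℝ) < (S.card : ℝ) := by exact_mod_cast hk0
            have hdiv : 1 / (cliqueAt G v : ℝ) ≤ 1 / (S.card : ℝ) :=
              one_div_le_one_div_of_le hkpos (hcv v hv)
            have hrw : ((cliqueAt G v : ℝ) - 1) / (cliqueAt G v : ℝ)
                = 1 - 1 / (cliqueAt G v : ℝ) := by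
              rw [sub_div, div_self (ne_of_gt hcpos)]
            rw [hrw]
            have := hpos v
            nlinarith
          · have : x v = 0 := by
              have : ¬ 0 < x v := by simpa [hSdef, suppF] using hv
              linarith [hpos v, not_lt.mp this]
            rw [this, mul_zero, mul_zero]
        calc 1 - 1 / (S.card : ℝ) = (1 - 1 / (S.card : ℝ)) * ∑ v, x v := by rw [hsum]; ring
          _ = ∑ v, (1 - 1 / (S.card : ℝ)) * x v := by rw [Finset.mul_sum]
          _ ≤ ∑ v, ((cliqueAt G v : ℝ) - 1) / (cliqueAt G v : ℝ) * x v :=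
              Finset.sum_le_sum fun v _ => hterm v
          _ = Af G x := rfl
      have hkpos : (0 : ℝ) < (S.card : ℝ) := by exact_mod_cast hk0
      have h3 : ∑ v, (x v) ^ 2 ≥ 1 / (S.card : ℝ) := by
        rw [ge_iff_le, div_le_iff₀ hkpos]
        linarith [hCS]
      linarith
    · -- support not a clique: exchange step
      push_neg at hcl
      obtain ⟨i, hi, j, hj, hij, hne⟩ := hcl
      have hxi : 0 < x i := by simpa [suppF] using hi
      have hxj : 0 < x j := by simpa [suppF] using hj
      have hjS : j ∈ suppF x := hj
      have hiS : i ∈ suppF x := hi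
      have main : ∀ (i' j' : Fin n), i' ≠ j' → ¬ G.Adj i' j' → 0 < x i' → j' ∈ suppF x →
          (Af G (dl i') - 2 * Bf G (dl i') (zer i' j' x)
            ≤ Af G (dl j') - 2 * Bf G (dl j') (zer i' j' x)) →
          Bf G x x ≤ Af G x := by
        intro i' j' hij' hne' hxi' hjS' hg
        obtain ⟨y, hynn, hysum, hysupp, hyPhi⟩ := step G x i' j' hij' hne' hpos hxi' hg
        have hycard : (suppF y).card ≤ k := by
          have h1 : (suppF y).card ≤ ((suppF x).erase j').card := Finset.card_le_card hysupp
          have h2 : ((suppF x).erase j').card = (suppF x).card - 1 :=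
            Finset.card_erase_of_mem hjS'
          omega
        have := ih y hycard hynn (by rw [hysum, hsum])
        linarith
      by_cases hg : Af G (dl i) - 2 * Bf G (dl i) (zer i j x)
          ≤ Af G (dl j) - 2 * Bf G (dl j) (zer i j x)
      · exact main i j hij hne hxi hjS hg
      · push_neg at hg
        have hzer : zer j i x = zer i j x := by
          funext v; unfold zer; exact if_congr or_comm rfl rfl
        exact main j i (Ne.symm hij) (fun h => hne h.symm) hxj hiS
          (by rw [hzer]; linarith)

end LocalTuran

theorem localTuran_aux {n : ℕ} (G : SimpleGraph (Fin n)) (hc : ∀ v : Fin n, 1 ≤ cliqueAt G v) :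
    G.edgeFinset.card ≤
      ⌊(n : ℝ) / 2 * ∑ v, ((cliqueAt G v : ℝ) - 1) / (cliqueAt G v : ℝ)⌋₊ := by
  rcases Nat.eq_zero_or_pos n with hn | hn
  · subst hn
    have hE : G.edgeFinset = ∅ := by
      rw [Finset.eq_empty_iff_forall_notMem]
      intro e he
      induction e using Sym2.ind with
      | _ a b => exact a.elim0
    rw [hE]
    simp
  · have hnR : (0 : ℝ) < (n : ℝ) := by exact_mod_cast hn
    have hnne : (n : ℝ) ≠ 0 := ne_of_gt hnR
    set x : Fin n → ℝ := fun _ => (n : ℝ)⁻¹ with hxdef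
    have hpos : ∀ v, 0 ≤ x v := fun v => by positivity
    have hsum : ∑ v, x v = 1 := by
      simp only [hxdef, Finset.sum_const, Finset.card_univ, Fintype.card_fin, nsmul_eq_mul]
      field_simp
    have hcard : (suppF x).card ≤ n := by
      calc (suppF x).card ≤ (univ : Finset (Fin n)).card := Finset.card_le_univ _
        _ = n := by simp
    have hkey := LocalTuran.key G n x hcard hpos hsum
    set Sa : ℝ := ∑ v, ((cliqueAt G v : ℝ) - 1) / (cliqueAt G v : ℝ) with hSa
    have hAx : LocalTuran.Af G x = Sa * (n : ℝ)⁻¹ := by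
      unfold LocalTuran.Af
      rw [hSa, Finset.sum_mul]
    have hEsum : ∑ u, ∑ v, LocalTuran.eW G u v = 2 * (G.edgeFinset.card : ℝ) := by
      have h1 : ∀ u, ∑ v, LocalTuran.eW G u v = (G.degree u : ℝ) := by
        intro u
        unfold LocalTuran.eW
        rw [Finset.sum_boole]
        congr 1
        simp [SimpleGraph.degree, SimpleGraph.neighborFinset_eq_filter]
      calc ∑ u, ∑ v, LocalTuran.eW G u v = ∑ u, (G.degree u : ℝ) :=
            Finset.sum_congr rfl fun u _ => h1 u
        _ = ((∑ u, G.degree u : ℕ) : ℝ) := by push_cast; rfl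
        _ = 2 * (G.edgeFinset.card : ℝ) := by
            rw [G.sum_degrees_eq_twice_card_edges]; push_cast; ring
    have hBx : LocalTuran.Bf G x x
        = 2 * (G.edgeFinset.card : ℝ) * ((n : ℝ)⁻¹ * (n : ℝ)⁻¹) := by
      unfold LocalTuran.Bf
      rw [← hEsum, Finset.sum_mul]
      refine Finset.sum_congr rfl fun u _ => ?_
      rw [Finset.sum_mul]
      refine Finset.sum_congr rfl fun v _ => ?_
      simp only [hxdef]
      ring
    rw [hBx, hAx] at hkey
    have h2 : 2 * (G.edgeFinset.card : ℝ) ≤ Sa * (n : ℝ) := by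
      have h3 := mul_le_mul_of_nonneg_right hkey
        (le_of_lt (by positivity : (0 : ℝ) < (n : ℝ) * (n : ℝ)))
      have e1 : 2 * (G.edgeFinset.card : ℝ) * ((n : ℝ)⁻¹ * (n : ℝ)⁻¹) * ((n : ℝ) * (n : ℝ))
          = 2 * (G.edgeFinset.card : ℝ) := by field_simp
      have e2 : Sa * (n : ℝ)⁻¹ * ((n : ℝ) * (n : ℝ)) = Sa * (n : ℝ) := by
        field_simp
      rw [e1, e2] at h3
      exact h3
    apply Nat.le_floor
    push_cast
    linarith

/-- The vertex-localized Turán theorem of Adak–Chandran. -/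
theorem stmt16 {n : ℕ} (G : SimpleGraph (Fin n)) (hc : ∀ v : Fin n, 1 ≤ cliqueAt G v) :
    G.edgeFinset.card ≤
      ⌊(n : ℝ) / 2 * ∑ v, ((cliqueAt G v : ℝ) - 1) / (cliqueAt G v : ℝ)⌋₊ := by
  exact localTuran_aux G hc
end
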